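/- Let N be a positive integer, let σ² > 0, and let P, Q ∈ ℂ^{N×N} be Hermitian positive semidefinite matrices with rank P < rank(P + Q). Then the ratio of determinants det(σ²·I_N + ρ·P) / det(2σ²·I_N + ρ·(P + Q)) tends to 0 as ρ → ∞. -/

import Mathlib

/-! By the spectral theorem, `det (c • 1 + ρ • A) = ∏ i, (c + ρ λᵢ)` for Hermitian `A` with
eigenvalues `λᵢ`. For `c ≠ 0` this is a real polynomial in `ρ` of degree `#{i | λᵢ ≠ 0} = rank A`,
so the ratio is a quotient of polynomials whose numerator has degree `rank P` and whose
denominator has the larger degree `rank (P + Q)`. -/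

open Matrix Real Filter
open scoped ComplexOrder Topology

namespace Matrix

variable {𝕜 n : Type*} [RCLike 𝕜] [Fintype n] [DecidableEq n]

lemma det_conjStarAlgAut (U : unitaryGroup n 𝕜) (M : Matrix n n 𝕜) :
    (Unitary.conjStarAlgAut 𝕜 _ U M).det = M.det := by
  rw [Unitary.conjStarAlgAut_apply, det_mul, det_mul, mul_right_comm, ← det_mul,
    mem_unitaryGroup_iff.mp U.2, det_one, one_mul]

lemma IsHermitian.det_smul_one_add_smul {A : Matrix n n 𝕜} (hA : A.IsHermitian) (c t : ℝ) :
    (c • (1 : Matrix n n 𝕜) + t • A).det = ((∏ i, (c + t * hA.eigenvalues i) : ℝ) : 𝕜) := by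
  simp only [RCLike.real_smul_eq_coe_smul (K := 𝕜)]
  conv_lhs =>
    rw [hA.spectral_theorem, ← map_one (Unitary.conjStarAlgAut 𝕜 _ hA.eigenvectorUnitary),
      ← map_smul, ← map_smul, ← map_add, det_conjStarAlgAut]
  rw [← diagonal_one, ← diagonal_smul, ← diagonal_smul, diagonal_add, det_diagonal]
  push_cast
  simp

end Matrix

namespace Polynomial

lemma natDegree_prod_C_mul_X_add_C {R ι : Type*} [CommRing R] [IsDomain R] [DecidableEq R]
    [Fintype ι] (a : ι → R) {c : R} (hc : c ≠ 0) :
    (∏ i, (C (a i) * X + C c)).natDegree = Fintype.card {i // a i ≠ 0} := by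
  rw [natDegree_prod _ _ fun i _ h => hc (by simpa using congrArg (eval 0) h),
    Fintype.card_subtype, Finset.card_eq_sum_ones, Finset.sum_filter]
  refine Finset.sum_congr rfl fun i _ => ?_
  by_cases h : a i = 0
  · simp [h]
  · rw [natDegree_linear h, if_pos h]

end Polynomial

open Polynomial in
lemma tendsto_prod_div_prod_atTop_zero_of_card_lt {ι κ : Type*} [Fintype ι] [Fintype κ]
    {c d : ℝ} (hc : c ≠ 0) (hd : d ≠ 0) (a : ι → ℝ) (b : κ → ℝ)
    (hab : Fintype.card {i // a i ≠ 0} < Fintype.card {j // b j ≠ 0}) :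
    Tendsto (fun t => (∏ i, (c + t * a i)) / ∏ j, (d + t * b j)) atTop (𝓝 0) := by
  have hdeg : (∏ i, (C (a i) * X + C c)).degree < (∏ j, (C (b j) * X + C d)).degree := by
    apply degree_lt_degree
    rwa [natDegree_prod_C_mul_X_add_C a hc, natDegree_prod_C_mul_X_add_C b hd]
  convert div_tendsto_atTop_zero_of_degree_lt _ _ hdeg using 2 with t
  simp only [eval_prod, eval_add, eval_mul, eval_C, eval_X]
  congr 1 <;> exact Finset.prod_congr rfl fun _ _ => by ring

theorem det_ratio_tendsto_zero_general (N : ℕ) (σ2 : ℝ) (hσ2 : 0 < σ2)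
    (P Q : Matrix (Fin N) (Fin N) ℂ)
    (hP : P.PosSemidef) (hQ : Q.PosSemidef)
    (hrank : P.rank < (P + Q).rank) :
    Tendsto (fun ρ : ℝ =>
        (σ2 • (1 : Matrix (Fin N) (Fin N) ℂ) + ρ • P).det.re
          / ((2 * σ2) • (1 : Matrix (Fin N) (Fin N) ℂ) + ρ • (P + Q)).det.re)
      atTop (𝓝 0) := by
  have hPQ := hP.isHermitian.add hQ.isHermitian
  simp_rw [hP.isHermitian.det_smul_one_add_smul, hPQ.det_smul_one_add_smul,
    ← RCLike.re_to_complex, RCLike.ofReal_re]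
  refine tendsto_prod_div_prod_atTop_zero_of_card_lt hσ2.ne' (by positivity) _ _ ?_
  rwa [← hP.isHermitian.rank_eq_card_non_zero_eigs, ← hPQ.rank_eq_card_non_zero_eigs]

/-- for Hermitian positive semidefinite `P, Q` with
`rank P < rank (P + Q)`, the ratio
`det(σ²·I + ρ·P) / det(2σ²·I + ρ·(P + Q))` tends to `0` as `ρ → ∞`. -/
theorem det_ratio_tendsto_zero (N : ℕ) (hN : 0 < N) (σ2 : ℝ) (hσ2 : 0 < σ2)
    (P Q : Matrix (Fin N) (Fin N) ℂ)
    (hP : P.PosSemidef) (hQ : Q.PosSemidef)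
    (hrank : P.rank < (P + Q).rank) :
    Tendsto (fun ρ : ℝ =>
        (σ2 • (1 : Matrix (Fin N) (Fin N) ℂ) + ρ • P).det.re
          / ((2 * σ2) • (1 : Matrix (Fin N) (Fin N) ℂ) + ρ • (P + Q)).det.re)
      atTop (𝓝 0) :=
  det_ratio_tendsto_zero_general N σ2 hσ2 P Q hP hQ hrank
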